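/- Correctness for λFm: for every System F type A with no free type variables (eigenvariables allowed), the verifier accepts the generator, i.e. ⟨A⟩(✠A) weak-head reduces in zero or more steps to ⋆. -/

import Mathlib

/-! The second-order metacalculus λFm: System F types (with eigenvariables) and
metaterms extended with ⋆, guards, generators ✠A, verifiers ⟨A⟩ and fresh
eigenvariable introduction ν𝐚.M. Type variables use de Bruijn indices, bound by
∀ (in types) and Λ (in terms); eigenvariables are named (natural numbers). -/

/-- System F types with eigenvariables: A ::= a | 𝐚 | A⇒B | ∀a.A. -/
inductive FTy : Type
  | tvar : ℕ → FTy
  | eig : ℕ → FTy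
  | arrow : FTy → FTy → FTy
  | all : FTy → FTy

namespace FTy

/-- Shift type-variable indices ≥ c by d. -/
def shift (d c : ℕ) : FTy → FTy
  | tvar n => if n < c then tvar n else tvar (n + d)
  | eig e => eig e
  | arrow A B => arrow (shift d c A) (shift d c B)
  | all A => all (shift d (c+1) A)

/-- Substitute the type variable k by B. -/
def subst (k : ℕ) (B : FTy) : FTy → FTy
  | tvar n => if n = k then B else if k < n then tvar (n-1) else tvar n
  | eig e => eig e
  | arrow A C => arrow (subst k B A) (subst k B C)
  | all A => all (subst (k+1) (shift 1 0 B) A)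

/-- The (free) eigenvariables of a type. -/
def eigs : FTy → Finset ℕ
  | tvar _ => ∅
  | eig e => {e}
  | arrow A B => A.eigs ∪ B.eigs
  | all A => A.eigs

/-- A type has no free type variables below cutoff c (eigenvariables allowed). -/
def TvClosed : FTy → ℕ → Prop
  | tvar n, c => n < c
  | eig _, _ => True
  | arrow A B, c => A.TvClosed c ∧ B.TvClosed c
  | all A, c => A.TvClosed (c+1)

end FTy

/-- Metaterms of λFm: M ::= x | λx.M | M N | Λa.M | M A | ⋆ | (M;N) | ✠A | ⟨A⟩M | ν𝐚.M. -/
inductive MTm : Type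
  | var : ℕ → MTm
  | lam : MTm → MTm
  | app : MTm → MTm → MTm
  | tlam : MTm → MTm
  | tapp : MTm → FTy → MTm
  | star : MTm
  | guard : MTm → MTm → MTm
  | gen : FTy → MTm
  | verif : FTy → MTm → MTm
  | nu : ℕ → MTm → MTm

namespace MTm

/-- Shift term-variable indices ≥ c by d. -/
def shift (d c : ℕ) : MTm → MTm
  | var n => if n < c then var n else var (n + d)
  | lam M => lam (shift d (c+1) M)
  | app M N => app (shift d c M) (shift d c N)
  | tlam M => tlam (shift d c M)
  | tapp M A => tapp (shift d c M) A
  | star => star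
  | guard M N => guard (shift d c M) (shift d c N)
  | gen A => gen A
  | verif A M => verif A (shift d c M)
  | nu e M => nu e (shift d c M)

/-- Shift type-variable indices ≥ c by d, in a metaterm. -/
def tshift (d c : ℕ) : MTm → MTm
  | var n => var n
  | lam M => lam (tshift d c M)
  | app M N => app (tshift d c M) (tshift d c N)
  | tlam M => tlam (tshift d (c+1) M)
  | tapp M A => tapp (tshift d c M) (FTy.shift d c A)
  | star => star
  | guard M N => guard (tshift d c M) (tshift d c N)
  | gen A => gen (FTy.shift d c A)
  | verif A M => verif (FTy.shift d c A) (tshift d c M)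
  | nu e M => nu e (tshift d c M)

/-- Substitute the term variable k by N. -/
def subst (k : ℕ) (N : MTm) : MTm → MTm
  | var n => if n = k then N else if k < n then var (n-1) else var n
  | lam M => lam (subst (k+1) (shift 1 0 N) M)
  | app M P => app (subst k N M) (subst k N P)
  | tlam M => tlam (subst k (tshift 1 0 N) M)
  | tapp M A => tapp (subst k N M) A
  | star => star
  | guard M P => guard (subst k N M) (subst k N P)
  | gen A => gen A
  | verif A M => verif A (subst k N M)
  | nu e M => nu e (subst k N M)

/-- Substitute the type variable k by the type A, in a metaterm. -/
def tsubst (k : ℕ) (A : FTy) : MTm → MTm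
  | var n => var n
  | lam M => lam (tsubst k A M)
  | app M N => app (tsubst k A M) (tsubst k A N)
  | tlam M => tlam (tsubst (k+1) (FTy.shift 1 0 A) M)
  | tapp M B => tapp (tsubst k A M) (FTy.subst k A B)
  | star => star
  | guard M N => guard (tsubst k A M) (tsubst k A N)
  | gen B => gen (FTy.subst k A B)
  | verif B M => verif (FTy.subst k A B) (tsubst k A M)
  | nu e M => nu e (tsubst k A M)

/-- The free eigenvariables of a metaterm (ν binds an eigenvariable). -/
def eigs : MTm → Finset ℕ
  | var _ => ∅
  | lam M => M.eigs
  | app M N => M.eigs ∪ N.eigs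
  | tlam M => M.eigs
  | tapp M A => M.eigs ∪ A.eigs
  | star => ∅
  | guard M N => M.eigs ∪ N.eigs
  | gen A => A.eigs
  | verif A M => A.eigs ∪ M.eigs
  | nu e M => M.eigs.erase e

end MTm

/-- A canonical choice of an eigenvariable fresh for A and M. -/
def freshE (A : FTy) (M : MTm) : ℕ := (A.eigs ∪ M.eigs).sup (· + 1)

/-- One-step reduction of λFm, closed under arbitrary contexts. -/
inductive FStep : MTm → MTm → Prop
  | beta (M N) : FStep (.app (.lam M) N) (MTm.subst 0 N M)
  | tbeta (M A) : FStep (.tapp (.tlam M) A) (MTm.tsubst 0 A M)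
  | guardStar (M) : FStep (.guard .star M) M
  | verifGen (e) : FStep (.verif (.eig e) (.gen (.eig e))) .star
  | genArrow (A B) : FStep (.gen (.arrow A B)) (.lam (.guard (.verif A (.var 0)) (.gen B)))
  | verifArrow (A B M) : FStep (.verif (.arrow A B) M) (.verif B (.app M (.gen A)))
  | genAll (A) : FStep (.gen (.all A)) (.tlam (.gen A))
  | verifAll (A M) :
      FStep (.verif (.all A) M)
        (.nu (freshE A M)
          (.verif (FTy.subst 0 (.eig (freshE A M)) A) (.tapp M (.eig (freshE A M)))))
  | nuElim {e M} : e ∉ MTm.eigs M → FStep (.nu e M) M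
  | lam {M M'} : FStep M M' → FStep (.lam M) (.lam M')
  | appL {M M'} (N) : FStep M M' → FStep (.app M N) (.app M' N)
  | appR {N N'} (M) : FStep N N' → FStep (.app M N) (.app M N')
  | tlam {M M'} : FStep M M' → FStep (.tlam M) (.tlam M')
  | tappL {M M'} (A) : FStep M M' → FStep (.tapp M A) (.tapp M' A)
  | guardL {M M'} (N) : FStep M M' → FStep (.guard M N) (.guard M' N)
  | guardR {N N'} (M) : FStep N N' → FStep (.guard M N) (.guard M N')
  | verifC {M M'} (A) : FStep M M' → FStep (.verif A M) (.verif A M')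
  | nuC {M M'} (e) : FStep M M' → FStep (.nu e M) (.nu e M')

/-- Weak head reduction of λFm: the rules closed under weak head contexts
W ::= □ | W M | W A | (W;M) | ⟨A⟩W | ν𝐚.W. -/
inductive WFStep : MTm → MTm → Prop
  | beta (M N) : WFStep (.app (.lam M) N) (MTm.subst 0 N M)
  | tbeta (M A) : WFStep (.tapp (.tlam M) A) (MTm.tsubst 0 A M)
  | guardStar (M) : WFStep (.guard .star M) M
  | verifGen (e) : WFStep (.verif (.eig e) (.gen (.eig e))) .star
  | genArrow (A B) : WFStep (.gen (.arrow A B)) (.lam (.guard (.verif A (.var 0)) (.gen B)))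
  | verifArrow (A B M) : WFStep (.verif (.arrow A B) M) (.verif B (.app M (.gen A)))
  | genAll (A) : WFStep (.gen (.all A)) (.tlam (.gen A))
  | verifAll (A M) :
      WFStep (.verif (.all A) M)
        (.nu (freshE A M)
          (.verif (FTy.subst 0 (.eig (freshE A M)) A) (.tapp M (.eig (freshE A M)))))
  | nuElim {e M} : e ∉ MTm.eigs M → WFStep (.nu e M) M
  | appL {M M'} (N) : WFStep M M' → WFStep (.app M N) (.app M' N)
  | tappL {M M'} (A) : WFStep M M' → WFStep (.tapp M A) (.tapp M' A)
  | guardL {M M'} (N) : WFStep M M' → WFStep (.guard M N) (.guard M' N)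
  | verifC {M M'} (A) : WFStep M M' → WFStep (.verif A M) (.verif A M')
  | nuC {M M'} (e) : WFStep M M' → WFStep (.nu e M) (.nu e M')

/-! By induction on the size of `A`. Groundness leaves eigenvariables as the only atoms, and
`⟨𝐚⟩(✠𝐚) → ⋆` (whereas `⟨a⟩(✠a)` would be stuck). An arrow type unfolds in three weak-head steps,
`⟨A⇒B⟩(✠(A⇒B)) ↠ ⟨B⟩(⟨A⟩(✠A); ✠B)`, and a quantified one in three more,
`⟨∀a.A⟩(✠(∀a.A)) ↠ ν𝐚.⟨A[a:=𝐚]⟩(✠A[a:=𝐚])`. Substituting an eigenvariable neither changes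
the size nor reintroduces free type variables, so the induction hypothesis applies to the
smaller verifier–generator pairs, and `ν𝐚.⋆ → ⋆` since `⋆` has no eigenvariables. -/

namespace FTy

def size : FTy → ℕ
  | tvar _ => 1
  | eig _ => 1
  | arrow A B => A.size + B.size + 1
  | all A => A.size + 1

@[simp]
lemma size_subst_eig (A : FTy) (k e : ℕ) : (subst k (eig e) A).size = A.size := by
  induction A generalizing k with
  | tvar n => simp only [subst]; split_ifs <;> rfl
  | eig => rfl
  | arrow A B ihA ihB => simp only [subst, size, ihA, ihB]
  | all A ih => simp only [subst, shift, size, ih]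

lemma TvClosed.subst_eig {A : FTy} {c k : ℕ} (hA : A.TvClosed (c + 1)) (hk : k ≤ c) (e : ℕ) :
    (subst k (eig e) A).TvClosed c := by
  induction A generalizing c k with
  | tvar n =>
    simp only [TvClosed] at hA
    simp only [subst]
    split_ifs <;> simp only [TvClosed] <;> omega
  | eig => trivial
  | arrow A B ihA ihB => exact ⟨ihA hA.1 hk, ihB hA.2 hk⟩
  | all A ih => exact ih hA (Nat.succ_le_succ hk)

end FTy

namespace WFStep

open Relation

lemma verif_gen_arrow (A B : FTy) :
    ReflTransGen WFStep (.verif (.arrow A B) (.gen (.arrow A B)))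
      (.verif B (.guard (.verif A (.gen A)) (.gen B))) :=
  .head (.verifArrow A B _) <| .head (.verifC B (.appL _ (.genArrow A B))) <|
    .single (.verifC B (.beta _ _))

lemma verif_gen_all (A : FTy) :
    ReflTransGen WFStep (.verif (.all A) (.gen (.all A)))
      (.nu (freshE A (.gen (.all A)))
        (.verif (FTy.subst 0 (.eig (freshE A (.gen (.all A)))) A)
          (.gen (FTy.subst 0 (.eig (freshE A (.gen (.all A)))) A)))) :=
  .head (.verifAll A _) <| .head (.nuC _ (.verifC _ (.tappL _ (.genAll A)))) <|
    .single (.nuC _ (.verifC _ (.tbeta _ _)))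

lemma reflTransGen_verif (A : FTy) {M M' : MTm} (h : ReflTransGen WFStep M M') :
    ReflTransGen WFStep (.verif A M) (.verif A M') :=
  ReflTransGen.lift (MTm.verif A) (fun _ _ => verifC A) _ _ h

lemma reflTransGen_guard (N : MTm) {M M' : MTm} (h : ReflTransGen WFStep M M') :
    ReflTransGen WFStep (.guard M N) (.guard M' N) :=
  ReflTransGen.lift (MTm.guard · N) (fun _ _ => guardL N) _ _ h

lemma reflTransGen_nu (e : ℕ) {M M' : MTm} (h : ReflTransGen WFStep M M') :
    ReflTransGen WFStep (.nu e M) (.nu e M') :=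
  ReflTransGen.lift (MTm.nu e) (fun _ _ => nuC e) _ _ h

lemma nu_star (e : ℕ) : WFStep (.nu e .star) .star :=
  .nuElim (Finset.notMem_empty e)

end WFStep

/-- Correctness for λFm: for every type A with no free type
variables (eigenvariables allowed), ⟨A⟩(✠A) weak-head reduces to ⋆. -/
theorem f_correctness (A : FTy) (hA : A.TvClosed 0) :
    Relation.ReflTransGen WFStep (MTm.verif A (MTm.gen A)) MTm.star := by
  match A, hA with
  | .eig e, _ => exact .single (.verifGen e)
  | .arrow A B, ⟨hA, hB⟩ =>
    exact (WFStep.verif_gen_arrow A B).trans <|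
      (WFStep.reflTransGen_verif B (WFStep.reflTransGen_guard _ (f_correctness A hA))).trans <|
      .head (.verifC B (.guardStar _)) (f_correctness B hB)
  | .all A, hA =>
    have hbody := f_correctness _ (hA.subst_eig le_rfl (freshE A (.gen (.all A))))
    exact (WFStep.verif_gen_all A).trans <|
      (WFStep.reflTransGen_nu _ hbody).tail (WFStep.nu_star _)
termination_by A.size
decreasing_by all_goals simp only [FTy.size, FTy.size_subst_eig]; omega
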